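/- For every y ∈ ℤ and every {0,…,T}-valued stopping time τ of the natural filtration of Y: U_{μ^{Root}_T}(y) ≥ E_y[U_{μ^{Root}}(Y_τ) 1_{τ < T} + U_λ(Y_τ) 1_{τ = T}]. -/

import Mathlib

/-!
Write `u t z := U_{μ^{Root}_t}(z)`. At time `t` the stopped walk `X_{ρ ∧ t}` either has stopped or
moves by a fair sign independent of its past, so averaging `w ↦ -|z - w|` over that sign gives
`u (t + 1) z ≤ u t z` and `(u t (z + 1) + u t (z - 1)) / 2 ≤ u (t + 1) z`; both are the midpoint
concavity of `w ↦ -|z - w|`. The second inequality makes `k ↦ u (T - k) (Y_k)` a supermartingale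
for the independent walk `Y`, so optional stopping gives `E_y[u (T - τ) (Y_τ)] ≤ u T y`. Finally
`u 0 = U_λ`, and `u t ≥ U_{μ^{Root}}` because `u t` decreases to `U_{μ^{Root}}`: uniform
integrability turns the a.s. convergence `X_{ρ ∧ t} → X_ρ` into convergence in `L¹`.
-/

open MeasureTheory ProbabilityTheory

noncomputable section

namespace SwitchingIdentities

variable {Ω : Type*} [MeasurableSpace Ω]

/-- The increment `ξ` has the fair `±1` law. -/
def FairSign (P : Measure Ω) (ξ : Ω → ℤ) : Prop :=
  P {ω | ξ ω = 1} = 1 / 2 ∧ P {ω | ξ ω = -1} = 1 / 2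

/-- `ξ` and `η` are the increment families of two independent simple symmetric random
walks on `ℤ`: all increments are measurable, fair `±1` coins, and the whole family
`(ξ₀, ξ₁, …, η₀, η₁, …)` is independent. -/
def IndepSSRWIncrements (P : Measure Ω) (ξ η : ℕ → Ω → ℤ) : Prop :=
  (∀ n, Measurable (ξ n)) ∧ (∀ n, Measurable (η n)) ∧
  (∀ n, FairSign P (ξ n)) ∧ (∀ n, FairSign P (η n)) ∧
  iIndepFun (Sum.elim ξ η) P

/-- The random walk with increments `ξ` started at `x`. -/
def walk (ξ : ℕ → Ω → ℤ) (x : ℤ) (t : ℕ) (ω : Ω) : ℤ :=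
  x + ∑ i ∈ Finset.range t, ξ i ω

/-- A Root continuation set: if `(t,m) ∈ D` then `(s,m) ∈ D` for all `s < t`. -/
def IsRootCont {α : Type*} (D : Set (ℕ × α)) : Prop :=
  ∀ t m, (t, m) ∈ D → ∀ s, s < t → (s, m) ∈ D

/-- A Rost continuation set: if `(t,m) ∈ D` then `(s,m) ∈ D` for all `s > t`. -/
def IsRostCont {α : Type*} (D : Set (ℕ × α)) : Prop :=
  ∀ t m, (t, m) ∈ D → ∀ s, t < s → (s, m) ∈ D

/-- `hit D Z ω = inf {t : (t, Z_t) ∉ D}` (junk value `0` if the walk never leaves `D`). -/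
def hit {α : Type*} (D : Set (ℕ × α)) (Z : ℕ → Ω → α) (ω : Ω) : ℕ :=
  sInf {t | (t, Z t ω) ∉ D}

/-- `hitBy D Z n ω = inf {t : (t, Z_t) ∉ D} ∧ n` (equal to `n` if the walk never leaves `D`). -/
def hitBy {α : Type*} (D : Set (ℕ × α)) (Z : ℕ → Ω → α) (n : ℕ) (ω : Ω) : ℕ :=
  sInf ({t | (t, Z t ω) ∉ D} ∪ {n})

/-- `revHitBy D Z T ω = inf {t : (T − t, Z_t) ∉ D} ∧ T`, the exit time of the time-reversed
space-time walk, capped at `T`. -/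
def revHitBy {α : Type*} (D : Set (ℕ × α)) (Z : ℕ → Ω → α) (T : ℕ) (ω : Ω) : ℕ :=
  sInf ({t | (T - t, Z t ω) ∉ D} ∪ {T})

/-- The potential function `U_m(z) = −∑_x |z − x| m({x})` of a measure `m` on `ℤ`. -/
def potential (m : Measure ℤ) (z : ℤ) : ℝ :=
  -∑' w : ℤ, (|z - w| : ℤ) * (m {w}).toReal

/-- A measure on `ℤ` has a finite first moment. -/
def FiniteFirstMoment (m : Measure ℤ) : Prop :=
  Integrable (fun z : ℤ => (z : ℝ)) m

/-- `τ` is a stopping time of the natural filtration of the process `Z`: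
`{τ ≤ n} ∈ σ(Z_0, …, Z_n)` for every `n`. -/
def IsNatStopping {α : Type*} [MeasurableSpace α] (Z : ℕ → Ω → α) (τ : Ω → ℕ) : Prop :=
  ∀ n : ℕ,
    MeasurableSet[MeasurableSpace.comap (fun ω => (fun i : Fin (n + 1) => Z i ω)) inferInstance]
      {ω | τ ω ≤ n}

/-- The law `μ^{Root}` of `X_{ρ^{Root}}` where `X` has increments `ξ` and `X_0 ∼ λ`. -/
def muRoot (P : Measure Ω) (ξ : ℕ → Ω → ℤ) (D : Set (ℕ × ℤ)) (lam : Measure ℤ) : Measure ℤ :=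
  Measure.map (fun p : ℤ × Ω => walk ξ p.1 (hit D (walk ξ p.1) p.2) p.2) (lam.prod P)

/-- The law `μ^{Root}_T` of `X_{ρ^{Root} ∧ T}` where `X` has increments `ξ` and `X_0 ∼ λ`. -/
def muRootT (P : Measure Ω) (ξ : ℕ → Ω → ℤ) (D : Set (ℕ × ℤ)) (lam : Measure ℤ) (T : ℕ) :
    Measure ℤ :=
  Measure.map (fun p : ℤ × Ω => walk ξ p.1 (hitBy D (walk ξ p.1) T p.2) p.2) (lam.prod P)

end SwitchingIdentities

namespace SwitchingIdentities

open Filter Topology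

section Hitting

variable {Ω α : Type*} {D : Set (ℕ × α)} {Z : ℕ → Ω → α} {ω : Ω}

lemma hitBy_le (t : ℕ) : hitBy D Z t ω ≤ t :=
  Nat.sInf_le (Or.inr rfl)

lemma hitBy_eq_self {t : ℕ} (h : ∀ s < t, (s, Z s ω) ∈ D) : hitBy D Z t ω = t := by
  refine le_antisymm (hitBy_le t) (le_csInf ⟨t, Or.inr rfl⟩ ?_)
  rintro s (hs | rfl)
  · by_contra! hst
    exact hs (h s hst)
  · rfl

lemma hitBy_eq_min_hit (h : ∃ s, (s, Z s ω) ∉ D) (t : ℕ) :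
    hitBy D Z t ω = min (hit D Z ω) t := by
  rw [hitBy, hit, csInf_union (s := {r | (r, Z r ω) ∉ D}) (OrderBot.bddBelow _) h
    (OrderBot.bddBelow _) (Set.singleton_nonempty t), csInf_singleton]

lemma hitBy_congr {Z' : ℕ → Ω → α} {ω' : Ω} {t : ℕ} (h : ∀ r ≤ t, Z r ω = Z' r ω') :
    hitBy D Z t ω = hitBy D Z' t ω' := by
  suffices key : ∀ (Z Z' : ℕ → Ω → α) (ω ω' : Ω), (∀ r ≤ t, Z r ω = Z' r ω') →
      hitBy D Z' t ω' ≤ hitBy D Z t ω from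
    le_antisymm (key Z' Z ω' ω fun r hr => (h r hr).symm) (key Z Z' ω ω' h)
  intro Z Z' ω ω' h
  have hle : hitBy D Z t ω ≤ t := hitBy_le t
  refine Nat.sInf_le ?_
  rcases Nat.sInf_mem (s := {r | (r, Z r ω) ∉ D} ∪ {t}) ⟨t, Or.inr rfl⟩ with hmem | hmem
  · refine Or.inl fun hD => hmem ?_
    show (_, Z (hitBy D Z t ω) ω) ∈ D
    rwa [h _ hle]
  · exact Or.inr hmem

end Hitting

section Walk

variable {Ω : Type*} {ξ : ℕ → Ω → ℤ} {D : Set (ℕ × ℤ)} {x : ℤ} {t : ℕ} {ω : Ω}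

/-- `X_{ρ ∧ t}` for the walk started at `x`. -/
def stoppedWalk (ξ : ℕ → Ω → ℤ) (D : Set (ℕ × ℤ)) (t : ℕ) (x : ℤ) (ω : Ω) : ℤ :=
  walk ξ x (hitBy D (walk ξ x) t ω) ω

/-- `X_ρ` for the walk started at `x`. -/
def exitWalk (ξ : ℕ → Ω → ℤ) (D : Set (ℕ × ℤ)) (x : ℤ) (ω : Ω) : ℤ :=
  walk ξ x (hit D (walk ξ x) ω) ω

lemma walk_zero : walk ξ x 0 ω = x := by
  simp [walk]

lemma walk_succ : walk ξ x (t + 1) ω = walk ξ x t ω + ξ t ω := by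
  simp [walk, Finset.sum_range_succ, add_assoc]

lemma walk_congr {ω' : Ω} (h : ∀ i < t, ξ i ω = ξ i ω') {r : ℕ} (hr : r ≤ t) :
    walk ξ x r ω = walk ξ x r ω' := by
  unfold walk
  congr 1
  exact Finset.sum_congr rfl fun i hi => h i ((Finset.mem_range.mp hi).trans_le hr)

lemma abs_walk_le (h : ∀ i, |ξ i ω| ≤ 1) : |walk ξ x t ω| ≤ |x| + t := by
  calc |walk ξ x t ω| ≤ |x| + ∑ i ∈ Finset.range t, |ξ i ω| :=
        (abs_add_le _ _).trans (add_le_add_right (Finset.abs_sum_le_sum_abs _ _) _)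
    _ ≤ |x| + ∑ _i ∈ Finset.range t, 1 := by gcongr with i; exact h i
    _ = |x| + t := by simp

lemma stoppedWalk_zero : stoppedWalk ξ D 0 x ω = x := by
  rw [stoppedWalk, Nat.le_zero.mp (hitBy_le 0), walk_zero]

open scoped Classical in
/-- The value `stoppedWalk ξ D (t + 1) x ω` would take if `ξ t ω` were `s`. -/
def stoppedWalkStep (ξ : ℕ → Ω → ℤ) (D : Set (ℕ × ℤ)) (t : ℕ) (x : ℤ) (ω : Ω) (s : ℤ) : ℤ :=
  stoppedWalk ξ D t x ω + if ∀ r ≤ t, (r, walk ξ x r ω) ∈ D then s else 0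

lemma stoppedWalkStep_of_forall_mem {s : ℤ} (h : ∀ r ≤ t, (r, walk ξ x r ω) ∈ D) :
    stoppedWalkStep ξ D t x ω s = stoppedWalk ξ D t x ω + s := by
  rw [stoppedWalkStep, if_pos h]

lemma stoppedWalkStep_of_not_forall_mem {s : ℤ} (h : ¬∀ r ≤ t, (r, walk ξ x r ω) ∈ D) :
    stoppedWalkStep ξ D t x ω s = stoppedWalk ξ D t x ω := by
  rw [stoppedWalkStep, if_neg h, add_zero]

lemma stoppedWalk_succ : stoppedWalk ξ D (t + 1) x ω = stoppedWalkStep ξ D t x ω (ξ t ω) := by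
  by_cases halive : ∀ s ≤ t, (s, walk ξ x s ω) ∈ D
  · rw [stoppedWalkStep_of_forall_mem halive, stoppedWalk, stoppedWalk,
      hitBy_eq_self fun s hs => halive s (by omega), hitBy_eq_self fun s hs => halive s hs.le,
      walk_succ]
  · rw [stoppedWalkStep_of_not_forall_mem halive]
    push Not at halive
    obtain ⟨s, hst, hs⟩ := halive
    have hhit : hit D (walk ξ x) ω ≤ t := (Nat.sInf_le hs).trans hst
    rw [stoppedWalk, stoppedWalk, hitBy_eq_min_hit ⟨s, hs⟩, hitBy_eq_min_hit ⟨s, hs⟩,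
      min_eq_left hhit, min_eq_left (hhit.trans t.le_succ)]

lemma stoppedWalk_congr {ω' : Ω} (h : ∀ i < t, ξ i ω = ξ i ω') :
    stoppedWalk ξ D t x ω = stoppedWalk ξ D t x ω' := by
  have hwalk : ∀ r ≤ t, walk ξ x r ω = walk ξ x r ω' := fun r hr => walk_congr h hr
  rw [stoppedWalk, stoppedWalk, ← hitBy_congr hwalk]
  exact hwalk _ (hitBy_le t)

lemma stoppedWalkStep_congr {ω' : Ω} (h : ∀ i < t, ξ i ω = ξ i ω') (s : ℤ) :
    stoppedWalkStep ξ D t x ω s = stoppedWalkStep ξ D t x ω' s := by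
  have halive : (∀ r ≤ t, (r, walk ξ x r ω) ∈ D) ↔ ∀ r ≤ t, (r, walk ξ x r ω') ∈ D :=
    forall₂_congr fun r hr => by rw [walk_congr h hr]
  classical
  rw [stoppedWalkStep, stoppedWalkStep, stoppedWalk_congr h, if_congr halive rfl rfl]

lemma abs_stoppedWalk_le (h : ∀ i, |ξ i ω| ≤ 1) : |stoppedWalk ξ D t x ω| ≤ |x| + t := by
  have hle : hitBy D (walk ξ x) t ω ≤ t := hitBy_le t
  have := abs_walk_le (x := x) (t := hitBy D (walk ξ x) t ω) h
  rw [stoppedWalk]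
  omega

lemma abs_stoppedWalkStep_le (h : ∀ i, |ξ i ω| ≤ 1) (s : ℤ) :
    |stoppedWalkStep ξ D t x ω s| ≤ |x| + t + |s| := by
  have hS := abs_stoppedWalk_le (D := D) (x := x) (t := t) h
  by_cases halive : ∀ r ≤ t, (r, walk ξ x r ω) ∈ D
  · rw [stoppedWalkStep_of_forall_mem halive]
    have := abs_add_le (stoppedWalk ξ D t x ω) s
    omega
  · rw [stoppedWalkStep_of_not_forall_mem halive]
    have := abs_nonneg s
    omega

lemma stoppedWalk_eq_exitWalk (h : ∃ s, (s, walk ξ x s ω) ∉ D)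
    (ht : hit D (walk ξ x) ω ≤ t) : stoppedWalk ξ D t x ω = exitWalk ξ D x ω := by
  rw [stoppedWalk, hitBy_eq_min_hit h, min_eq_left ht, exitWalk]

end Walk

lemma measurable_of_factorsThrough {α β γ : Type*} {mα : MeasurableSpace α} [MeasurableSpace β]
    [MeasurableSpace γ] [Countable γ] [MeasurableSingletonClass γ] {V : α → γ} (hV : Measurable V)
    {f : α → β} (hf : f.FactorsThrough V) : Measurable f := by
  intro s _
  convert hV (Set.to_countable (V '' (f ⁻¹' s))).measurableSet using 1
  ext a
  refine ⟨fun ha => ⟨a, ha, rfl⟩, ?_⟩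
  rintro ⟨a', ha', hVa⟩
  rw [Set.mem_preimage, ← hf hVa]
  exact ha'

abbrev pastSigma {Ω : Type*} (ξ : ℕ → Ω → ℤ) (t : ℕ) : MeasurableSpace Ω :=
  ⨆ i ∈ Set.Iio t, MeasurableSpace.comap (ξ i) inferInstance

section PastSigma

variable {Ω : Type*} {ξ : ℕ → Ω → ℤ} {t : ℕ}

lemma measurable_pastSigma_of_congr {β : Type*} [MeasurableSpace β] {f : Ω → β}
    (hf : ∀ ω ω', (∀ i < t, ξ i ω = ξ i ω') → f ω = f ω') : Measurable[pastSigma ξ t] f := by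
  let := pastSigma ξ t
  exact measurable_of_factorsThrough (V := fun ω (i : Fin t) => ξ i ω)
    (measurable_pi_lambda _ fun i => Measurable.of_comap_le <| le_iSup₂
      (f := fun j (_ : j ∈ Set.Iio t) => MeasurableSpace.comap (ξ j) inferInstance) i.1 i.2)
    fun ω ω' hV => hf ω ω' fun i hi => congrFun hV ⟨i, hi⟩

lemma measurable_walk_pastSigma {x : ℤ} {r : ℕ} (hr : r ≤ t) :
    Measurable[pastSigma ξ t] (walk ξ x r) :=
  measurable_pastSigma_of_congr fun _ _ h => walk_congr h hr

lemma measurable_stoppedWalk_pastSigma {D : Set (ℕ × ℤ)} {x : ℤ} :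
    Measurable[pastSigma ξ t] (stoppedWalk ξ D t x) :=
  measurable_pastSigma_of_congr fun _ _ h => stoppedWalk_congr h

lemma measurable_stoppedWalkStep_pastSigma {D : Set (ℕ × ℤ)} {x : ℤ} (s : ℤ) :
    Measurable[pastSigma ξ t] (stoppedWalkStep ξ D t x · s) :=
  measurable_pastSigma_of_congr fun _ _ h => stoppedWalkStep_congr h s

lemma measurableSet_pastSigma_of_isNatStopping {y : ℤ} {τ : Ω → ℕ}
    (hτ : IsNatStopping (walk ξ y) τ) (n : ℕ) : MeasurableSet[pastSigma ξ n] {ω | τ ω ≤ n} := by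
  let := pastSigma ξ n
  exact Measurable.comap_le (measurable_pi_lambda (fun ω (i : Fin (n + 1)) => walk ξ y i ω)
    fun i => measurable_walk_pastSigma (Nat.lt_succ_iff.mp i.2)) _ (hτ n)

end PastSigma

section ProbabilityMeasure

variable {Ω : Type*} [MeasurableSpace Ω] {P : Measure Ω} [IsProbabilityMeasure P]

lemma FairSign.ae_eq_one_or_eq_neg_one {e : Ω → ℤ} (he : Measurable e) (hfair : FairSign P e) :
    ∀ᵐ ω ∂P, e ω = 1 ∨ e ω = -1 := by
  have hdisj : Disjoint {ω | e ω = 1} {ω | e ω = -1} :=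
    Set.disjoint_left.mpr fun ω h1 h2 => by simp_all
  have hmeas : MeasurableSet {ω | e ω = -1} := he (measurableSet_singleton _)
  have hunion : P ({ω | e ω = 1} ∪ {ω | e ω = -1}) = P Set.univ := by
    rw [measure_union hdisj hmeas, hfair.1, hfair.2, ENNReal.add_halves, measure_univ]
  exact (ae_iff_measure_eq ((he (measurableSet_singleton _)).union hmeas).nullMeasurableSet).2
    hunion

lemma integrable_comp_of_ae_mem_finset {β : Type*} [MeasurableSpace β] [Countable β]
    [MeasurableSingletonClass β] {g : Ω → β} (hg : Measurable g) (S : Finset β)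
    (hS : ∀ᵐ ω ∂P, g ω ∈ S) (f : β → ℝ) : Integrable (fun ω => f (g ω)) P :=
  Integrable.of_bound ((measurable_of_countable f).comp hg).aestronglyMeasurable (∑ b ∈ S, ‖f b‖)
    (hS.mono fun _ hω => Finset.single_le_sum (f := fun b => ‖f b‖) (fun _ _ => norm_nonneg _) hω)

end ProbabilityMeasure

lemma integral_comp_fairSign_of_indep {Ω : Type*} {m : MeasurableSpace Ω} [mΩ : MeasurableSpace Ω]
    {P : Measure Ω} [IsProbabilityMeasure P] {e : Ω → ℤ} (he : Measurable e)
    (hfair : FairSign P e) (hind : Indep m (MeasurableSpace.comap e inferInstance) P)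
    {ψ : Ω → ℤ → ℝ} (hψm : ∀ s, Measurable[m] (ψ · s)) (hψi : ∀ s, Integrable (ψ · s) P) :
    ∫ ω, ψ ω (e ω) ∂P = (∫ ω, ψ ω 1 ∂P + ∫ ω, ψ ω (-1) ∂P) / 2 := by
  have hEs : ∀ s, MeasurableSet {ω | e ω = s} := fun s => he (measurableSet_singleton s)
  let χ : ℤ → Ω → ℝ := fun s => {ω | e ω = s}.indicator 1
  have hχm : ∀ s, Measurable[MeasurableSpace.comap e inferInstance] (χ s) := fun s =>
    measurable_const.indicator ⟨{s}, measurableSet_singleton s, rfl⟩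
  have hindep : ∀ s, IndepFun (ψ · s) (χ s) P := fun s =>
    (IndepFun_iff_Indep _ _ _).2 <| indep_of_indep_of_le_right
      (indep_of_indep_of_le_left hind (hψm s).comap_le) (hχm s).comap_le
  have hχi : ∀ s, Integrable (χ s) P := fun s =>
    (integrable_const 1).indicator (hEs s)
  have hhalf : ∀ s, P {ω | e ω = s} = 1 / 2 →
      ∫ ω, ψ ω s * χ s ω ∂P = (∫ ω, ψ ω s ∂P) / 2 := by
    intro s hs
    have hmul := (hindep s).integral_mul_eq_mul_integral (hψi s).aestronglyMeasurable
      (hχi s).aestronglyMeasurable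
    simp only [Pi.mul_apply] at hmul
    rw [hmul]
    simp only [χ]
    rw [integral_indicator_one (hEs s), measureReal_def, hs]
    simp [div_eq_mul_inv]
  have hsplit : ∀ᵐ ω ∂P, ψ ω (e ω) = ψ ω 1 * χ 1 ω + ψ ω (-1) * χ (-1) ω := by
    filter_upwards [hfair.ae_eq_one_or_eq_neg_one he] with ω hω
    rcases hω with h | h <;> simp [χ, h]
  have hint : ∀ s, Integrable (fun ω => ψ ω s * χ s ω) P := fun s =>
    (hindep s).integrable_mul (hψi s) (hχi s)
  rw [integral_congr_ae hsplit, integral_add (hint 1) (hint (-1)), hhalf 1 hfair.1,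
    hhalf (-1) hfair.2]
  ring

structure IsSSRWIncrements {Ω : Type*} [MeasurableSpace Ω] (P : Measure Ω) (ξ : ℕ → Ω → ℤ) :
    Prop where
  measurable : ∀ n, Measurable (ξ n)
  fairSign : ∀ n, FairSign P (ξ n)
  iIndepFun : iIndepFun ξ P

section IsSSRWIncrements

variable {Ω : Type*} [MeasurableSpace Ω] {P : Measure Ω}

lemma IndepSSRWIncrements.left {ξ η : ℕ → Ω → ℤ} (h : IndepSSRWIncrements P ξ η) :
    IsSSRWIncrements P ξ :=
  ⟨h.1, h.2.2.1, h.2.2.2.2.precomp (g := Sum.inl) Sum.inl_injective⟩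

lemma IndepSSRWIncrements.right {ξ η : ℕ → Ω → ℤ} (h : IndepSSRWIncrements P ξ η) :
    IsSSRWIncrements P η :=
  ⟨h.2.1, h.2.2.2.1, h.2.2.2.2.precomp (g := Sum.inr) Sum.inr_injective⟩

variable {ξ : ℕ → Ω → ℤ} (hξ : IsSSRWIncrements P ξ)
include hξ

lemma IsSSRWIncrements.pastSigma_le (t : ℕ) : pastSigma ξ t ≤ ‹MeasurableSpace Ω› :=
  iSup₂_le fun i _ => (hξ.measurable i).comap_le

lemma IsSSRWIncrements.indep_pastSigma (t : ℕ) :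
    Indep (pastSigma ξ t) (MeasurableSpace.comap (ξ t) inferInstance) P := by
  have := indep_iSup_of_disjoint (fun i => (hξ.measurable i).comap_le)
    ((iIndepFun_iff_iIndep _ _ _).1 hξ.iIndepFun) (S := Set.Iio t) (T := {t}) (by simp)
  simpa [pastSigma] using this

lemma IsSSRWIncrements.measurable_walk {x : ℤ} {t : ℕ} : Measurable (walk ξ x t) :=
  (measurable_walk_pastSigma le_rfl).mono (hξ.pastSigma_le t) le_rfl

lemma IsSSRWIncrements.measurable_of_isNatStopping {y : ℤ} {τ : Ω → ℕ}
    (hτ : IsNatStopping (walk ξ y) τ) : Measurable τ :=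
  measurable_of_Iic fun n => hξ.pastSigma_le n _ (measurableSet_pastSigma_of_isNatStopping hτ n)

variable [IsProbabilityMeasure P]

lemma IsSSRWIncrements.ae_abs_le_one : ∀ᵐ ω ∂P, ∀ i, |ξ i ω| ≤ 1 :=
  ae_all_iff.2 fun i => ((hξ.fairSign i).ae_eq_one_or_eq_neg_one (hξ.measurable i)).mono
    fun ω h => by rcases h with h | h <;> simp [h]

lemma IsSSRWIncrements.integrable_comp_walk {σ : Ω → ℕ} (hσ : Measurable σ) {T : ℕ}
    (hσT : ∀ ω, σ ω ≤ T) (y : ℤ) (f : ℕ → ℤ → ℝ) :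
    Integrable (fun ω => f (σ ω) (walk ξ y (σ ω) ω)) P := by
  have hwalk : Measurable fun ω => walk ξ y (σ ω) ω :=
    (measurable_from_prod_countable_left (f := fun p : Ω × ℕ => walk ξ y p.2 p.1)
      fun _ => hξ.measurable_walk).comp (measurable_id.prodMk hσ)
  refine integrable_comp_of_ae_mem_finset (g := fun ω => (σ ω, walk ξ y (σ ω) ω))
    (hσ.prodMk hwalk) (Finset.range (T + 1) ×ˢ Finset.Icc (-(|y| + T)) (|y| + T)) ?_
    fun p => f p.1 p.2
  filter_upwards [hξ.ae_abs_le_one] with ω hω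
  have hle := abs_walk_le (x := y) (t := σ ω) hω
  have := hσT ω
  simp only [Finset.mem_product, Finset.mem_range, Finset.mem_Icc, ← abs_le]
  omega

end IsSSRWIncrements

section StoppedWalk

variable {Ω : Type*} [MeasurableSpace Ω] {P : Measure Ω} {ξ : ℕ → Ω → ℤ}
  (hξ : IsSSRWIncrements P ξ) {D : Set (ℕ × ℤ)} {x : ℤ} {t : ℕ}
include hξ

lemma IsSSRWIncrements.measurable_stoppedWalk : Measurable (stoppedWalk ξ D t x) :=
  measurable_stoppedWalk_pastSigma.mono (hξ.pastSigma_le t) le_rfl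

lemma IsSSRWIncrements.measurable_stoppedWalk_prod :
    Measurable fun p : ℤ × Ω => stoppedWalk ξ D t p.1 p.2 :=
  measurable_from_prod_countable_right fun _ => hξ.measurable_stoppedWalk

variable [IsProbabilityMeasure P]

lemma IsSSRWIncrements.integrable_comp_stoppedWalk (f : ℤ → ℝ) :
    Integrable (fun ω => f (stoppedWalk ξ D t x ω)) P := by
  refine integrable_comp_of_ae_mem_finset hξ.measurable_stoppedWalk
    (Finset.Icc (-(|x| + t)) (|x| + t)) ?_ f
  filter_upwards [hξ.ae_abs_le_one] with ω hω
  exact Finset.mem_Icc.2 (abs_le.1 (abs_stoppedWalk_le hω))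

lemma IsSSRWIncrements.integrable_comp_stoppedWalkStep (f : ℤ → ℝ) (s : ℤ) :
    Integrable (fun ω => f (stoppedWalkStep ξ D t x ω s)) P := by
  refine integrable_comp_of_ae_mem_finset
    ((measurable_stoppedWalkStep_pastSigma s).mono (hξ.pastSigma_le t) le_rfl)
    (Finset.Icc (-(|x| + t + |s|)) (|x| + t + |s|)) ?_ f
  filter_upwards [hξ.ae_abs_le_one] with ω hω
  exact Finset.mem_Icc.2 (abs_le.1 (abs_stoppedWalkStep_le hω s))

lemma IsSSRWIncrements.integral_comp_stoppedWalk_succ (f : ℤ → ℝ) :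
    ∫ ω, f (stoppedWalk ξ D (t + 1) x ω) ∂P =
      (∫ ω, f (stoppedWalkStep ξ D t x ω 1) ∂P +
        ∫ ω, f (stoppedWalkStep ξ D t x ω (-1)) ∂P) / 2 := by
  simp only [stoppedWalk_succ]
  exact integral_comp_fairSign_of_indep (hξ.measurable t) (hξ.fairSign t) (hξ.indep_pastSigma t)
    (fun s => (measurable_of_countable f).comp (measurable_stoppedWalkStep_pastSigma s))
    (hξ.integrable_comp_stoppedWalkStep f)

variable {f : ℤ → ℝ} (hf : ∀ w, f (w + 1) + f (w - 1) ≤ 2 * f w)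
include hf

lemma IsSSRWIncrements.integral_comp_stoppedWalk_succ_le :
    ∫ ω, f (stoppedWalk ξ D (t + 1) x ω) ∂P ≤ ∫ ω, f (stoppedWalk ξ D t x ω) ∂P := by
  rw [hξ.integral_comp_stoppedWalk_succ, div_le_iff₀ two_pos, mul_comm, ← integral_const_mul,
    ← integral_add (hξ.integrable_comp_stoppedWalkStep f 1)
      (hξ.integrable_comp_stoppedWalkStep f (-1))]
  refine integral_mono ((hξ.integrable_comp_stoppedWalkStep f 1).add
    (hξ.integrable_comp_stoppedWalkStep f (-1))) ((hξ.integrable_comp_stoppedWalk f).const_mul 2)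
    fun ω => ?_
  by_cases halive : ∀ r ≤ t, (r, walk ξ x r ω) ∈ D
  · simp only [stoppedWalkStep_of_forall_mem halive, ← sub_eq_add_neg]
    exact hf _
  · simp only [stoppedWalkStep_of_not_forall_mem halive]
    linarith

lemma IsSSRWIncrements.integral_comp_stoppedWalk_add_sub_le :
    (∫ ω, f (stoppedWalk ξ D t x ω + 1) ∂P + ∫ ω, f (stoppedWalk ξ D t x ω - 1) ∂P) / 2 ≤
      ∫ ω, f (stoppedWalk ξ D (t + 1) x ω) ∂P := by
  rw [hξ.integral_comp_stoppedWalk_succ]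
  gcongr ?_ / 2
  have hup := hξ.integrable_comp_stoppedWalk (D := D) (x := x) (t := t) fun w => f (w + 1)
  have hdown := hξ.integrable_comp_stoppedWalk (D := D) (x := x) (t := t) fun w => f (w - 1)
  rw [← integral_add hup hdown, ← integral_add (hξ.integrable_comp_stoppedWalkStep f 1)
      (hξ.integrable_comp_stoppedWalkStep f (-1))]
  refine integral_mono (hup.add hdown) ((hξ.integrable_comp_stoppedWalkStep f 1).add
    (hξ.integrable_comp_stoppedWalkStep f (-1))) fun ω => ?_
  by_cases halive : ∀ r ≤ t, (r, walk ξ x r ω) ∈ D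
  · simp only [stoppedWalkStep_of_forall_mem halive, ← sub_eq_add_neg, le_refl]
  · simp only [stoppedWalkStep_of_not_forall_mem halive]
    linarith [hf (stoppedWalk ξ D t x ω)]

end StoppedWalk

lemma potential_map_eq_integral {α : Type*} [MeasurableSpace α] {μ : Measure α} {G : α → ℤ}
    (hG : AEMeasurable G μ) {z : ℤ} (hint : Integrable (fun a => ((|z - G a| : ℤ) : ℝ)) μ) :
    potential (μ.map G) z = ∫ a, -((|z - G a| : ℤ) : ℝ) ∂μ := by
  have hint' : Integrable (fun w : ℤ => ((|z - w| : ℤ) : ℝ)) (μ.map G) :=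
    (integrable_map_measure (measurable_of_countable _).aestronglyMeasurable hG).2 hint
  rw [integral_neg, ← integral_map (f := fun w : ℤ => ((|z - w| : ℤ) : ℝ)) hG
    (measurable_of_countable _).aestronglyMeasurable,
    integral_countable hint', potential]
  exact congrArg _ (tsum_congr fun w => by rw [smul_eq_mul, mul_comm, measureReal_def])

lemma norm_neg_abs_sub_sub_neg_abs_sub_le (z a b : ℤ) :
    ‖-((|z - a| : ℤ) : ℝ) - -((|z - b| : ℤ) : ℝ)‖ ≤ ‖(a : ℝ) - b‖ := by
  have h := abs_abs_sub_abs_le_abs_sub ((z : ℝ) - b) ((z : ℝ) - a)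
  rw [sub_sub_sub_cancel_left] at h
  push_cast
  rwa [Real.norm_eq_abs, Real.norm_eq_abs, neg_sub_neg]

lemma neg_abs_sub_add_neg_abs_sub_le (z w : ℤ) :
    -((|z - (w + 1)| : ℤ) : ℝ) + -((|z - (w - 1)| : ℤ) : ℝ) ≤ 2 * -((|z - w| : ℤ) : ℝ) := by
  have h := abs_add_le ((z : ℝ) - (w + 1)) ((z : ℝ) - (w - 1))
  rw [show (z : ℝ) - (w + 1) + (z - (w - 1)) = 2 * (z - w) by ring, abs_mul, abs_two] at h
  push_cast
  linarith

section RootLaws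

variable {Ω : Type*} [MeasurableSpace Ω] {P : Measure Ω} {ξ : ℕ → Ω → ℤ}
  (hξ : IsSSRWIncrements P ξ) {D : Set (ℕ × ℤ)} {lam : Measure ℤ}

lemma muRootT_eq_map (t : ℕ) :
    muRootT P ξ D lam t = (lam.prod P).map fun p => stoppedWalk ξ D t p.1 p.2 :=
  rfl

lemma muRoot_eq_map :
    muRoot P ξ D lam = (lam.prod P).map fun p => exitWalk ξ D p.1 p.2 :=
  rfl

variable [IsProbabilityMeasure P]

lemma muRootT_zero : muRootT P ξ D lam 0 = lam := by
  have hfst : (fun p : ℤ × Ω => walk ξ p.1 (hitBy D (walk ξ p.1) 0 p.2) p.2) = Prod.fst :=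
    funext fun _ => stoppedWalk_zero
  rw [muRootT, hfst, Measure.map_fst_prod, measure_univ, one_smul]

variable [IsProbabilityMeasure lam] (hlam : FiniteFirstMoment lam)
include hξ hlam

lemma IsSSRWIncrements.integrable_abs_sub_stoppedWalk (t : ℕ) (z : ℤ) :
    Integrable (fun p : ℤ × Ω => ((|z - stoppedWalk ξ D t p.1 p.2| : ℤ) : ℝ)) (lam.prod P) := by
  refine Integrable.mono' ((hlam.abs.comp_fst P).add (integrable_const ((|z| + t : ℤ) : ℝ)))
    ((measurable_of_countable fun w : ℤ => ((|z - w| : ℤ) : ℝ)).comp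
      hξ.measurable_stoppedWalk_prod).aestronglyMeasurable ?_
  filter_upwards [measurePreserving_snd.quasiMeasurePreserving.ae hξ.ae_abs_le_one] with p hp
  have hS := abs_stoppedWalk_le (D := D) (x := p.1) (t := t) hp
  have hz : |z - stoppedWalk ξ D t p.1 p.2| ≤ |p.1| + (|z| + t) := (abs_sub _ _).trans (by omega)
  rw [Real.norm_eq_abs, abs_of_nonneg (by positivity)]
  show _ ≤ |((p.1 : ℤ) : ℝ)| + ((|z| + t : ℤ) : ℝ)
  rw [← Int.cast_abs]
  exact_mod_cast hz

lemma IsSSRWIncrements.potential_muRootT_eq_integral (t : ℕ) (z : ℤ) :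
    potential (muRootT P ξ D lam t) z =
      ∫ p, -((|z - stoppedWalk ξ D t p.1 p.2| : ℤ) : ℝ) ∂(lam.prod P) := by
  rw [muRootT_eq_map, potential_map_eq_integral hξ.measurable_stoppedWalk_prod.aemeasurable
    (hξ.integrable_abs_sub_stoppedWalk hlam t z)]

lemma IsSSRWIncrements.potential_muRootT_eq_integral_integral (t : ℕ) (z : ℤ) :
    potential (muRootT P ξ D lam t) z =
      ∫ x, ∫ ω, -((|z - stoppedWalk ξ D t x ω| : ℤ) : ℝ) ∂P ∂lam := by
  rw [hξ.potential_muRootT_eq_integral hlam]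
  exact integral_prod (fun p : ℤ × Ω => -((|z - stoppedWalk ξ D t p.1 p.2| : ℤ) : ℝ))
    (hξ.integrable_abs_sub_stoppedWalk hlam t z).neg

lemma IsSSRWIncrements.integrable_integral_stoppedWalk (t : ℕ) (z : ℤ) :
    Integrable (fun x => ∫ ω, -((|z - stoppedWalk ξ D t x ω| : ℤ) : ℝ) ∂P) lam :=
  (hξ.integrable_abs_sub_stoppedWalk hlam t z).neg.integral_prod_left

lemma IsSSRWIncrements.potential_muRootT_succ_le (t : ℕ) (z : ℤ) :
    potential (muRootT P ξ D lam (t + 1)) z ≤ potential (muRootT P ξ D lam t) z := by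
  simp only [hξ.potential_muRootT_eq_integral_integral hlam]
  exact integral_mono (hξ.integrable_integral_stoppedWalk hlam _ z)
    (hξ.integrable_integral_stoppedWalk hlam t z) fun x =>
      hξ.integral_comp_stoppedWalk_succ_le (f := fun w => -((|z - w| : ℤ) : ℝ))
        (neg_abs_sub_add_neg_abs_sub_le z)

lemma IsSSRWIncrements.potential_muRootT_add_sub_le (t : ℕ) (z : ℤ) :
    (potential (muRootT P ξ D lam t) (z + 1) + potential (muRootT P ξ D lam t) (z - 1)) / 2 ≤
      potential (muRootT P ξ D lam (t + 1)) z := by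
  simp only [hξ.potential_muRootT_eq_integral_integral hlam]
  rw [add_comm, ← integral_add (hξ.integrable_integral_stoppedWalk hlam t _)
      (hξ.integrable_integral_stoppedWalk hlam t _), ← integral_div]
  refine integral_mono (((hξ.integrable_integral_stoppedWalk hlam t _).add
    (hξ.integrable_integral_stoppedWalk hlam t _)).div_const 2)
    (hξ.integrable_integral_stoppedWalk hlam _ z) fun x => ?_
  refine le_of_eq_of_le ?_ (hξ.integral_comp_stoppedWalk_add_sub_le (D := D) (x := x) (t := t)
    (f := fun w => -((|z - w| : ℤ) : ℝ)) (neg_abs_sub_add_neg_abs_sub_le z))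
  congr 3 <;> funext ω <;> ring_nf

variable (hfin : ∀ᵐ p ∂(lam.prod P), ∃ t, (t, walk ξ p.1 t p.2) ∉ D)
  (hUI : UniformIntegrable (fun t (p : ℤ × Ω) => (stoppedWalk ξ D t p.1 p.2 : ℝ)) 1 (lam.prod P))
include hfin hUI

lemma IsSSRWIncrements.tendsto_potential_muRootT (z : ℤ) :
    Tendsto (fun t => potential (muRootT P ξ D lam t) z) atTop
      (𝓝 (potential (muRoot P ξ D lam) z)) := by
  have hev : ∀ᵐ p ∂(lam.prod P),
      ∀ᶠ t in atTop, exitWalk ξ D p.1 p.2 = stoppedWalk ξ D t p.1 p.2 := by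
    filter_upwards [hfin] with p hp
    exact eventually_atTop.2 ⟨_, fun t ht => (stoppedWalk_eq_exitWalk hp ht).symm⟩
  have hconv : ∀ᵐ p ∂(lam.prod P), Tendsto (fun t => (stoppedWalk ξ D t p.1 p.2 : ℝ)) atTop
      (𝓝 (exitWalk ξ D p.1 p.2 : ℝ)) :=
    hev.mono fun p hp => tendsto_const_nhds.congr' (hp.mono fun t ht => by rw [ht])
  have hexit : AEMeasurable (fun p : ℤ × Ω => exitWalk ξ D p.1 p.2) (lam.prod P) :=
    aemeasurable_of_tendsto_metrizable_ae' (fun t => hξ.measurable_stoppedWalk_prod.aemeasurable)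
      (hev.mono fun p hp => tendsto_const_nhds.congr' hp)
  have hE : Integrable (fun p : ℤ × Ω => (exitWalk ξ D p.1 p.2 : ℝ)) (lam.prod P) :=
    hUI.integrable_of_ae_tendsto hconv
  have hEz : Integrable (fun p : ℤ × Ω => ((|z - exitWalk ξ D p.1 p.2| : ℤ) : ℝ)) (lam.prod P) :=
    ((integrable_const (z : ℝ)).sub hE).abs.congr (ae_of_all _ fun p => by push_cast; rfl)
  have hL1 := tendsto_Lp_finite_of_tendsto_ae le_rfl ENNReal.one_ne_top hUI.1
    (memLp_one_iff_integrable.2 hE) hUI.2.1 hconv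
  simp_rw [hξ.potential_muRootT_eq_integral hlam, muRoot_eq_map,
    potential_map_eq_integral hexit hEz]
  refine tendsto_integral_of_L1 _ hEz.neg.aestronglyMeasurable
    (Eventually.of_forall fun t => (hξ.integrable_abs_sub_stoppedWalk hlam t z).neg) ?_
  refine tendsto_of_tendsto_of_tendsto_of_le_of_le tendsto_const_nhds hL1 (fun _ => zero_le)
    fun t => ?_
  rw [eLpNorm_one_eq_lintegral_enorm]
  exact lintegral_mono fun p => enorm_le_iff_norm_le.2 (norm_neg_abs_sub_sub_neg_abs_sub_le _ _ _)

lemma IsSSRWIncrements.potential_muRoot_le (t : ℕ) (z : ℤ) :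
    potential (muRoot P ξ D lam) z ≤ potential (muRootT P ξ D lam t) z :=
  (antitone_nat_of_succ_le fun t => hξ.potential_muRootT_succ_le hlam t z).le_of_tendsto
    (hξ.tendsto_potential_muRootT hlam hfin hUI z) t

end RootLaws

lemma apply_min_succ_eq_add_indicator {Ω : Type*} (M : ℕ → Ω → ℝ) (τ : Ω → ℕ) (k : ℕ) (ω : Ω) :
    M (min (k + 1) (τ ω)) ω =
      M (min k (τ ω)) ω + {ω | k < τ ω}.indicator (fun ω => M (k + 1) ω - M k ω) ω := by
  rcases lt_or_ge k (τ ω) with h | h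
  · rw [min_eq_left h, min_eq_left h.le, Set.indicator_of_mem (s := {ω | k < τ ω}) h]
    ring
  · rw [min_eq_right (h.trans k.le_succ), min_eq_right h,
      Set.indicator_of_notMem (s := {ω | k < τ ω}) (not_lt.2 h), add_zero]

section OptionalStopping

variable {Ω : Type*} [MeasurableSpace Ω] {P : Measure Ω} [IsProbabilityMeasure P]
  {η : ℕ → Ω → ℤ} (hη : IsSSRWIncrements P η) {y : ℤ}
include hη

lemma IsSSRWIncrements.setIntegral_comp_walk_succ_le {n : ℕ} {A : Set Ω}
    (hA : MeasurableSet[pastSigma η n] A) {v w : ℤ → ℝ}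
    (hvw : ∀ z, (v (z + 1) + v (z - 1)) / 2 ≤ w z) :
    ∫ ω in A, v (walk η y (n + 1) ω) ∂P ≤ ∫ ω in A, w (walk η y n ω) ∂P := by
  have hA' : MeasurableSet A := hη.pastSigma_le n _ hA
  have hint : ∀ f : ℤ → ℝ, Integrable (fun ω => f (walk η y n ω)) P := fun f =>
    hη.integrable_comp_walk (σ := fun _ => n) measurable_const (fun _ => le_rfl) y fun _ => f
  let ψ : Ω → ℤ → ℝ := fun ω s => A.indicator (fun ω => v (walk η y n ω + s)) ω
  have hψm : ∀ s, Measurable[pastSigma η n] (ψ · s) := fun s =>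
    ((measurable_of_countable v).comp ((measurable_walk_pastSigma le_rfl).add_const s)).indicator hA
  have hψi : ∀ s, Integrable (ψ · s) P := fun s => (hint fun z => v (z + s)).indicator hA'
  calc ∫ ω in A, v (walk η y (n + 1) ω) ∂P = ∫ ω, ψ ω (η n ω) ∂P := by
        rw [← integral_indicator hA']
        congr with ω
        by_cases hω : ω ∈ A <;> simp [ψ, hω, walk_succ]
    _ = ∫ ω in A, (v (walk η y n ω + 1) + v (walk η y n ω - 1)) / 2 ∂P := by
        rw [integral_comp_fairSign_of_indep (hη.measurable n) (hη.fairSign n)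
          (hη.indep_pastSigma n) hψm hψi, ← integral_add (hψi 1) (hψi (-1)), ← integral_div,
          ← integral_indicator hA']
        congr with ω
        by_cases hω : ω ∈ A <;> simp [ψ, hω, sub_eq_add_neg]
    _ ≤ ∫ ω in A, w (walk η y n ω) ∂P :=
        setIntegral_mono (((hint fun z => v (z + 1)).add (hint fun z => v (z - 1))).div_const
          2).integrableOn (hint w).integrableOn fun ω => hvw _

lemma IsSSRWIncrements.integral_comp_walk_stopped_le {τ : Ω → ℕ}
    (hτ : IsNatStopping (walk η y) τ) {T : ℕ} (hτT : ∀ ω, τ ω ≤ T) {u : ℕ → ℤ → ℝ}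
    (hu : ∀ t z, (u t (z + 1) + u t (z - 1)) / 2 ≤ u (t + 1) z) :
    ∫ ω, u (T - τ ω) (walk η y (τ ω) ω) ∂P ≤ u T y := by
  have hτm := hη.measurable_of_isNatStopping hτ
  let M : ℕ → Ω → ℝ := fun k ω => u (T - k) (walk η y k ω)
  have hint : ∀ σ : Ω → ℕ, Measurable σ → (∀ ω, σ ω ≤ T) → Integrable (fun ω => M (σ ω) ω) P :=
    fun σ hσ hσT => hη.integrable_comp_walk hσ hσT y fun j w => u (T - j) w
  suffices key : ∀ k ≤ T, ∫ ω, M (min k (τ ω)) ω ∂P ≤ u T y by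
    simpa only [M, min_eq_right (hτT _)] using key T le_rfl
  intro k
  induction k with
  | zero => intro _; simp [M, walk_zero]
  | succ k ih =>
    intro hk
    have hA : MeasurableSet[pastSigma η k] {ω | k < τ ω} := by
      simpa only [Set.compl_ofPred, not_le] using
        (measurableSet_pastSigma_of_isNatStopping hτ k).compl
    have hA' : MeasurableSet {ω | k < τ ω} := hη.pastSigma_le k _ hA
    have hstep : ∫ ω in {ω | k < τ ω}, M (k + 1) ω ∂P ≤ ∫ ω in {ω | k < τ ω}, M k ω ∂P :=
      hη.setIntegral_comp_walk_succ_le hA fun z => by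
        simpa only [show T - (k + 1) + 1 = T - k by omega] using hu (T - (k + 1)) z
    have hMk := hint (fun _ => k) measurable_const fun _ => by omega
    have hMk' := hint (fun _ => k + 1) measurable_const fun _ => hk
    have hdiff : Integrable (fun ω => M (k + 1) ω - M k ω) P := hMk'.sub hMk
    calc ∫ ω, M (min (k + 1) (τ ω)) ω ∂P
        = ∫ ω, M (min k (τ ω)) ω ∂P +
            (∫ ω in {ω | k < τ ω}, M (k + 1) ω ∂P - ∫ ω in {ω | k < τ ω}, M k ω ∂P) := by
          rw [funext (apply_min_succ_eq_add_indicator M τ k),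
            integral_add (hint _ (measurable_const.min hτm) fun _ => by omega)
            (hdiff.indicator hA'), integral_indicator hA',
            integral_sub hMk'.integrableOn hMk.integrableOn]
      _ ≤ ∫ ω, M (min k (τ ω)) ω ∂P := by linarith
      _ ≤ u T y := ih (by omega)

end OptionalStopping

variable {Ω : Type*} [MeasurableSpace Ω]

theorem root_optimal_stopping_upper_bound_general
    (P : Measure Ω) [IsProbabilityMeasure P] (ξ η : ℕ → Ω → ℤ)
    (h : IndepSSRWIncrements P ξ η)
    (D : Set (ℕ × ℤ))
    (lam : Measure ℤ) [IsProbabilityMeasure lam] (hlam : FiniteFirstMoment lam)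
    (T : ℕ)
    (hfin : ∀ᵐ p ∂(lam.prod P), ∃ t, (t, walk ξ p.1 t p.2) ∉ D)
    (hUI : UniformIntegrable
      (fun (t : ℕ) (p : ℤ × Ω) => ((walk ξ p.1 (hitBy D (walk ξ p.1) t p.2) p.2 : ℤ) : ℝ))
      1 (lam.prod P))
    (y : ℤ) (τ : Ω → ℕ) (hτ : IsNatStopping (walk η y) τ) (hτT : ∀ ω, τ ω ≤ T) :
    potential (muRootT P ξ D lam T) y
      ≥ ∫ ω,
          ((if τ ω < T then potential (muRoot P ξ D lam) (walk η y (τ ω) ω) else 0)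
          + (if τ ω = T then potential lam (walk η y (τ ω) ω) else 0)) ∂P := by
  have hξ := h.left
  have hη := h.right
  have hτm := hη.measurable_of_isNatStopping hτ
  calc ∫ ω, ((if τ ω < T then potential (muRoot P ξ D lam) (walk η y (τ ω) ω) else 0)
          + (if τ ω = T then potential lam (walk η y (τ ω) ω) else 0)) ∂P
      ≤ ∫ ω, potential (muRootT P ξ D lam (T - τ ω)) (walk η y (τ ω) ω) ∂P := by
        refine integral_mono (hη.integrable_comp_walk hτm hτT y fun j w =>
            (if j < T then potential (muRoot P ξ D lam) w else 0)
              + if j = T then potential lam w else 0)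
          (hη.integrable_comp_walk hτm hτT y fun j w => potential (muRootT P ξ D lam (T - j)) w)
          fun ω => ?_
        rcases (hτT ω).lt_or_eq with hlt | heq
        · simpa [hlt, hlt.ne] using hξ.potential_muRoot_le hlam hfin hUI _ _
        · simp [heq, muRootT_zero]
    _ ≤ potential (muRootT P ξ D lam T) y :=
        hη.integral_comp_walk_stopped_le hτ hτT fun t z => hξ.potential_muRootT_add_sub_le hlam t z

/-- for every `y ∈ ℤ` and every `{0,…,T}`-valued stopping time `τ` of the
natural filtration of `Y`,
`U_{μ^{Root}_T}(y) ≥ E_y[U_{μ^{Root}}(Y_τ) 1_{τ < T} + U_λ(Y_τ) 1_{τ = T}]`. -/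
theorem root_optimal_stopping_upper_bound
    (P : Measure Ω) [IsProbabilityMeasure P] (ξ η : ℕ → Ω → ℤ)
    (h : IndepSSRWIncrements P ξ η)
    (D : Set (ℕ × ℤ)) (hD : IsRootCont D)
    (lam : Measure ℤ) [IsProbabilityMeasure lam] (hlam : FiniteFirstMoment lam)
    (T : ℕ)
    (hfin : ∀ᵐ p ∂(lam.prod P), ∃ t, (t, walk ξ p.1 t p.2) ∉ D)
    (hUI : UniformIntegrable
      (fun (t : ℕ) (p : ℤ × Ω) => ((walk ξ p.1 (hitBy D (walk ξ p.1) t p.2) p.2 : ℤ) : ℝ))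
      1 (lam.prod P))
    (y : ℤ) (τ : Ω → ℕ) (hτ : IsNatStopping (walk η y) τ) (hτT : ∀ ω, τ ω ≤ T) :
    potential (muRootT P ξ D lam T) y
      ≥ ∫ ω,
          ((if τ ω < T then potential (muRoot P ξ D lam) (walk η y (τ ω) ω) else 0)
          + (if τ ω = T then potential lam (walk η y (τ ω) ω) else 0)) ∂P :=
  root_optimal_stopping_upper_bound_general P ξ η h D lam hlam T hfin hUI y τ hτ hτT

end SwitchingIdentities
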